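/- arXiv:1809.07110 — 6 statements merged into one kernel-verified Lean document; each statement's English description precedes it below -/
import Mathlib

section
/- For x ≥ 1, the function h(x) = 1 - x + x·log(x) satisfies 3(x-1)²/(6 + 2(x-1)) ≤ h(x) ≤ (x-1)²/2. -/
noncomputable def h (x : ℝ) : ℝ := 1 - x + x * Real.log x

/-!
Since `h 1 = 0` and `h' = log`, the upper bound follows from `log x ≤ x - 1`. For the lower
bound, `(2x + 4) h x - 3 (x - 1)²` vanishes at `1` and has derivative
`4 ((x + 1) log x - 2 (x - 1))`, which is nonnegative by the classical estimate
`log x ≥ 2 (x - 1) / (x + 1)`; that estimate is proved the same way from `log x ≥ 1 - 1/x`.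
-/

open Real

theorem le_of_hasDerivAt_le_of_le {f g f' g' : ℝ → ℝ} {a x : ℝ} (ha : f a ≤ g a)
    (hf : ∀ y, a ≤ y → HasDerivAt f (f' y) y) (hg : ∀ y, a ≤ y → HasDerivAt g (g' y) y)
    (hle : ∀ y, a ≤ y → f' y ≤ g' y) (hx : a ≤ x) : f x ≤ g x :=
  image_le_of_deriv_right_le_deriv_boundary
    (fun y hy ↦ (hf y hy.1).continuousAt.continuousWithinAt)
    (fun y hy ↦ (hf y hy.1).hasDerivWithinAt) ha
    (fun y hy ↦ (hg y hy.1).continuousAt.continuousWithinAt)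
    (fun y hy ↦ (hg y hy.1).hasDerivWithinAt) (fun y hy ↦ hle y hy.1) ⟨hx, le_rfl⟩

theorem hasDerivAt_h {x : ℝ} (hx : x ≠ 0) : HasDerivAt h (log x) x :=
  (((hasDerivAt_id' x).const_sub 1).add (hasDerivAt_mul_log hx)).congr_deriv (by ring)

theorem two_mul_sub_one_le_add_one_mul_log {x : ℝ} (hx : 1 ≤ x) :
    2 * (x - 1) ≤ (x + 1) * log x := by
  refine le_of_hasDerivAt_le_of_le (f := fun y ↦ 2 * (y - 1)) (g := fun y ↦ (y + 1) * log y)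
    (f' := fun _ ↦ 2) (g' := fun y ↦ log y + (y + 1) * y⁻¹) (by simp)
    (fun y _ ↦ (((hasDerivAt_id' y).sub_const 1).const_mul 2).congr_deriv (by ring))
    (fun y hy ↦ (((hasDerivAt_id' y).add_const 1).mul
      (hasDerivAt_log (by positivity))).congr_deriv (by ring))
    (fun y hy ↦ ?_) hx
  have hy0 : 0 < y := by linarith
  have : (y + 1) * y⁻¹ = 1 + y⁻¹ := by field_simp
  linarith [one_sub_inv_le_log_of_pos hy0]

theorem h_le_sq_div_two {x : ℝ} (hx : 1 ≤ x) : h x ≤ (x - 1) ^ 2 / 2 :=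
  le_of_hasDerivAt_le_of_le (g := fun y ↦ (y - 1) ^ 2 / 2) (g' := fun y ↦ y - 1) (by simp [h])
    (fun y hy ↦ hasDerivAt_h (by positivity))
    (fun y _ ↦ ((((hasDerivAt_id' y).sub_const 1).pow 2).div_const 2).congr_deriv (by ring))
    (fun y hy ↦ log_le_sub_one_of_pos (by positivity)) hx

theorem three_mul_sq_le_mul_h {x : ℝ} (hx : 1 ≤ x) : 3 * (x - 1) ^ 2 ≤ (2 * x + 4) * h x := by
  refine le_of_hasDerivAt_le_of_le (f := fun y ↦ 3 * (y - 1) ^ 2)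
    (g := fun y ↦ (2 * y + 4) * h y) (f' := fun y ↦ 6 * (y - 1))
    (g' := fun y ↦ 2 * h y + (2 * y + 4) * log y) (by simp [h])
    (fun y _ ↦ ((((hasDerivAt_id' y).sub_const 1).pow 2).const_mul 3).congr_deriv (by ring))
    (fun y hy ↦ ((((hasDerivAt_id' y).const_mul 2).add_const 4).mul
      (hasDerivAt_h (by positivity))).congr_deriv (by ring))
    (fun y hy ↦ ?_) hx
  have := two_mul_sub_one_le_add_one_mul_log hy
  simp only [h]
  linarith

theorem h_bounds (x : ℝ) (hx : 1 ≤ x) :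
    3 * (x - 1) ^ 2 / (6 + 2 * (x - 1)) ≤ h x ∧ h x ≤ (x - 1) ^ 2 / 2 := by
  refine ⟨?_, h_le_sq_div_two hx⟩
  rw [div_le_iff₀ (by linarith)]
  linarith [three_mul_sq_le_mul_h hx]
end

section
/- Let ρ > 0, p_n = e^{-ρ} ρⁿ/n! for n ≥ 0, and c = ⌊ρ - 1/2⌋ (assume ρ ≥ 1/2 so that c ≥ 0). Then for every integer a with 0 ≤ a ≤ c - 1, ∑_{j=0}^{c-a-1} p_j < ∑_{j=c+a+1}^∞ p_j. -/
/-- The Poisson(ρ) probability mass function. -/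
noncomputable def poissonPMF (ρ : ℝ) (n : ℕ) : ℝ :=
  Real.exp (-ρ) * ρ ^ n / (Nat.factorial n)

/-
Consecutive Poisson weights satisfy `p (n + 1) = p n * ρ / (n + 1)`, so the ratio
`p (c + m) / p (c - m)` grows with `m` by the factor `ρ² / ((c - m) (c + m + 1))`, which exceeds `1`
because `(c - m) (c + m + 1) ≤ c (c + 1) < (c + 1/2)² ≤ ρ²`. Hence `p (c - m) < p (c + m)` for
`1 ≤ m ≤ c`, and reflecting the lower sum pairs each of its terms with a larger term of the upper tail.
-/

lemma poissonPMF_nonneg {ρ : ℝ} (hρ : 0 ≤ ρ) (n : ℕ) : 0 ≤ poissonPMF ρ n := by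
  unfold poissonPMF
  positivity

lemma poissonPMF_pos {ρ : ℝ} (hρ : 0 < ρ) (n : ℕ) : 0 < poissonPMF ρ n := by
  unfold poissonPMF
  positivity

lemma poissonPMF_succ (ρ : ℝ) (n : ℕ) :
    poissonPMF ρ (n + 1) = poissonPMF ρ n * ρ / (n + 1) := by
  unfold poissonPMF
  rw [pow_succ, Nat.factorial_succ]
  push_cast
  field_simp

lemma summable_poissonPMF (ρ : ℝ) : Summable (poissonPMF ρ) :=
  ((Real.summable_pow_div_factorial ρ).mul_left (Real.exp (-ρ))).congr fun n => by
    rw [poissonPMF, mul_div_assoc]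

lemma poissonPMF_lt_succ_of_succ_le {ρ : ℝ} (hρ : 0 < ρ) {k l : ℕ}
    (hkl : poissonPMF ρ (k + 1) ≤ poissonPMF ρ l) (hρkl : ((k : ℝ) + 1) * (l + 1) < ρ ^ 2) :
    poissonPMF ρ k < poissonPMF ρ (l + 1) := by
  rw [poissonPMF_succ] at hkl ⊢
  have hl := poissonPMF_pos hρ l
  rw [div_le_iff₀ (by positivity)] at hkl
  rw [lt_div_iff₀ (by positivity)]
  nlinarith [mul_lt_mul_of_pos_left hρkl hl]

lemma poissonPMF_sub_lt_add {ρ : ℝ} {c : ℕ} (hρ : (c : ℝ) + 1 / 2 ≤ ρ) {m : ℕ} (hm : m < c) :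
    poissonPMF ρ (c - (m + 1)) < poissonPMF ρ (c + (m + 1)) := by
  have hρpos : 0 < ρ := by linarith [(c.cast_nonneg : (0 : ℝ) ≤ c)]
  have hgap (m : ℕ) : ((c : ℝ) - m) * (c + m + 1) < ρ ^ 2 := by
    nlinarith [(m.cast_nonneg : (0 : ℝ) ≤ m)]
  induction m with
  | zero =>
    refine poissonPMF_lt_succ_of_succ_le hρpos (by rw [Nat.sub_add_cancel hm]) ?_
    rw [Nat.cast_sub hm]
    convert hgap 0 using 1
    push_cast
    ring
  | succ m ih =>
    have hle : poissonPMF ρ (c - (m + 1 + 1) + 1) ≤ poissonPMF ρ (c + (m + 1)) := by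
      rw [show c - (m + 1 + 1) + 1 = c - (m + 1) by omega]
      exact (ih (by omega)).le
    refine poissonPMF_lt_succ_of_succ_le (l := c + (m + 1)) hρpos hle ?_
    rw [Nat.cast_sub hm]
    convert hgap (m + 1) using 1
    push_cast
    ring

lemma sum_range_poissonPMF_lt_sum_range_add {ρ : ℝ} {c : ℕ} (hρ : (c : ℝ) + 1 / 2 ≤ ρ) {a : ℕ}
    (ha : a < c) :
    ∑ j ∈ Finset.range (c - a), poissonPMF ρ j <
      ∑ j ∈ Finset.range (c - a), poissonPMF ρ (c + a + 1 + j) := by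
  rw [← Finset.sum_range_reflect]
  refine Finset.sum_lt_sum_of_nonempty (Finset.nonempty_range_iff.mpr (by omega)) fun j hj => ?_
  rw [Finset.mem_range] at hj
  have := poissonPMF_sub_lt_add hρ (m := a + j) (by omega)
  rwa [show c - (a + j + 1) = c - a - 1 - j by omega, show c + (a + j + 1) = c + a + 1 + j by omega]
    at this

theorem poisson_lower_tail_lt_upper_tail (ρ : ℝ) (hρ : (1:ℝ)/2 ≤ ρ)
    (c : ℕ) (hc : (c : ℝ) = ⌊ρ - 1/2⌋) (a : ℕ) (ha : a + 1 ≤ c) :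
    ∑ j ∈ Finset.range (c - a), poissonPMF ρ j <
      ∑' j : ℕ, poissonPMF ρ (c + a + 1 + j) := by
  have hρc : (c : ℝ) + 1 / 2 ≤ ρ := by
    have := Int.floor_le (ρ - 1 / 2)
    rw [← hc] at this
    linarith
  have hsummable : Summable fun j => poissonPMF ρ (c + a + 1 + j) := by
    simpa only [add_comm _ (c + a + 1)] using
      (summable_nat_add_iff (c + a + 1)).mpr (summable_poissonPMF ρ)
  calc ∑ j ∈ Finset.range (c - a), poissonPMF ρ j
      < ∑ j ∈ Finset.range (c - a), poissonPMF ρ (c + a + 1 + j) :=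
        sum_range_poissonPMF_lt_sum_range_add hρc ha
    _ ≤ ∑' j, poissonPMF ρ (c + a + 1 + j) :=
        hsummable.sum_le_tsum _ fun j _ => poissonPMF_nonneg (by linarith) _
end

section
/- Let ρ > 0, b a positive integer, b* = b + 1/2, and 1 ≤ i ≤ b. If b* ≤ ρ, then p_{b-i} < p_{b+i}, where p_n = e^{-ρ} ρⁿ/n!. -/
/-! Pairing the factors `b - k + 1` and `b + k` of `(b + i)! / (b - i)!`, each pair is
`(b + 1/2)² - (k - 1/2)² ≤ b (b + 1) = (b + 1/2)² - 1/4 < ρ²`, so the ratio is below `ρ^(2i)`. -/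

open Nat

lemma add_succ_mul_sub_le_mul_succ {n i : ℕ} (hin : i ≤ n) :
    (n + i + 1) * (n - i) ≤ n * (n + 1) := by
  zify [hin]
  nlinarith

lemma factorial_add_le_pow_mul_factorial_sub {n i : ℕ} (hin : i ≤ n) :
    (n + i)! ≤ (n * (n + 1)) ^ i * (n - i)! := by
  induction i with
  | zero => simp
  | succ i ih =>
    have hsub : n - i = n - (i + 1) + 1 := by omega
    calc (n + (i + 1))! = (n + i + 1) * (n + i)! := Nat.factorial_succ _
      _ ≤ (n + i + 1) * ((n * (n + 1)) ^ i * (n - i)!) := by gcongr; exact ih (by omega)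
      _ = (n + i + 1) * (n - i) * (n * (n + 1)) ^ i * (n - (i + 1))! := by
        rw [hsub, Nat.factorial_succ, ← hsub]; ring
      _ ≤ n * (n + 1) * (n * (n + 1)) ^ i * (n - (i + 1))! := by
        gcongr ?_ * _ * _
        exact add_succ_mul_sub_le_mul_succ (by omega)
      _ = (n * (n + 1)) ^ (i + 1) * (n - (i + 1))! := by ring

lemma poissonPMF_lt_poissonPMF_iff {ρ : ℝ} (hρ : 0 < ρ) {m n : ℕ} (hmn : m ≤ n) :
    poissonPMF ρ m < poissonPMF ρ n ↔ (n ! : ℝ) < ρ ^ (n - m) * m ! := by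
  have hpow : ρ ^ n = ρ ^ m * ρ ^ (n - m) := by rw [← pow_add, Nat.add_sub_cancel' hmn]
  have hscale : 0 < Real.exp (-ρ) * ρ ^ m := by positivity
  unfold poissonPMF
  rw [div_lt_div_iff₀ (by positivity) (by positivity), hpow,
    show Real.exp (-ρ) * (ρ ^ m * ρ ^ (n - m)) * m ! = Real.exp (-ρ) * ρ ^ m * (ρ ^ (n - m) * m !)
      by ring, mul_lt_mul_iff_right₀ hscale]

theorem poisson_pmf_lower_lt_upper_general (ρ : ℝ) (hρ : 0 < ρ) (b i : ℕ)
    (hi1 : 1 ≤ i) (hib : i ≤ b) (hbs : (b : ℝ) + 1/2 ≤ ρ) :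
    poissonPMF ρ (b - i) < poissonPMF ρ (b + i) := by
  rw [poissonPMF_lt_poissonPMF_iff hρ (by omega), show b + i - (b - i) = 2 * i by omega,
    pow_mul]
  have hpair : (b : ℝ) * (b + 1) < ρ ^ 2 := by nlinarith
  calc ((b + i)! : ℝ) ≤ ((b : ℝ) * (b + 1)) ^ i * (b - i)! := by
        exact_mod_cast factorial_add_le_pow_mul_factorial_sub hib
    _ < (ρ ^ 2) ^ i * (b - i)! := by gcongr

theorem poisson_pmf_lower_lt_upper (ρ : ℝ) (hρ : 0 < ρ) (b i : ℕ) (hb : 1 ≤ b)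
    (hi1 : 1 ≤ i) (hib : i ≤ b) (hbs : (b : ℝ) + 1/2 ≤ ρ) :
    poissonPMF ρ (b - i) < poissonPMF ρ (b + i) :=
  poisson_pmf_lower_lt_upper_general ρ hρ b i hi1 hib hbs
end

section
/- Let ε ∈ (0,1) with log ε < 0, ρ > 0, and m₊ = ρ - (log ε)/3 · (1 + √(1 - 18ρ/log ε)) - 1. Then P(Poisson(ρ) > ⌈m₊⌉) ≤ ε; in particular m_ε(ρ) ≤ ⌈m₊⌉. -/
/-!
Chernoff's method with `t = log (k / ρ)` bounds `P(X ≥ k)` for `X ~ Poisson(ρ)` by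
`exp (-ρ h(y))`, where `k = ρ (1 + y)` and `h(y) = (1 + y) log (1 + y) - y` is Bennett's function.
The `[2/2]` Padé lower bound for `log (1 + y)` gives `h(y) ≥ 3 y² / (6 + 2 y)`, so the tail is at
most `ε` as soon as `3 ρ y² + 2 y log ε + 6 log ε ≥ 0`, i.e. once `y` exceeds the larger root of
this quadratic, and `m₊ + 1 = ρ (1 + y₊)` for that root `y₊`.
-/

/-- `P(X > m)` for `X ~ Poisson(ρ)`. -/
noncomputable def poissonTail (ρ : ℝ) (m : ℕ) : ℝ :=
  ∑' i : ℕ, Real.exp (-ρ) * ρ ^ (m + 1 + i) / (Nat.factorial (m + 1 + i))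

/-- `m_ε(ρ) = inf {m : P(Poisson(ρ) > m) ≤ ε}`. -/
noncomputable def mEps (ε ρ : ℝ) : ℕ := sInf {m : ℕ | poissonTail ρ m ≤ ε}

open Real Nat

lemma pade_le_log_one_add {x : ℝ} (hx : 0 ≤ x) :
    (6 * x + 3 * x ^ 2) / (x ^ 2 + 6 * x + 6) ≤ log (1 + x) := by
  let f : ℝ → ℝ := fun x => log (1 + x) - (6 * x + 3 * x ^ 2) / (x ^ 2 + 6 * x + 6)
  have hderiv : ∀ y : ℝ, 0 ≤ y →
      HasDerivAt f (y ^ 4 / ((1 + y) * (y ^ 2 + 6 * y + 6) ^ 2)) y := by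
    intro y hy
    have hD : y ^ 2 + 6 * y + 6 ≠ 0 := by positivity
    have hlog : HasDerivAt (fun x : ℝ => log (1 + x)) (1 / (1 + y)) y := by
      simpa using ((hasDerivAt_id y).const_add 1).log (by positivity)
    have hnum : HasDerivAt (fun x : ℝ => 6 * x + 3 * x ^ 2) (6 + 6 * y) y :=
      (((hasDerivAt_id y).const_mul 6).add ((hasDerivAt_pow 2 y).const_mul 3)).congr_deriv
        (by ring)
    have hden : HasDerivAt (fun x : ℝ => x ^ 2 + 6 * x + 6) (2 * y + 6) y :=
      (((hasDerivAt_pow 2 y).add ((hasDerivAt_id y).const_mul 6)).add_const 6).congr_deriv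
        (by ring)
    refine (hlog.sub (hnum.div hden hD)).congr_deriv ?_
    field_simp
    ring
  have hmono : MonotoneOn f (Set.Ici 0) := by
    refine monotoneOn_of_hasDerivWithinAt_nonneg (convex_Ici 0)
      (fun y hy => (hderiv y hy).continuousAt.continuousWithinAt)
      (fun y hy => (hderiv y (interior_subset hy)).hasDerivWithinAt) fun y hy => ?_
    have hy : 0 ≤ y := interior_subset hy
    positivity
  simpa [f] using hmono Set.self_mem_Ici hx hx

lemma three_mul_sq_div_le_one_add_mul_log_one_add_sub {y : ℝ} (hy : 0 ≤ y) :
    3 * y ^ 2 / (6 + 2 * y) ≤ (1 + y) * log (1 + y) - y := by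
  have hD : 0 < y ^ 2 + 6 * y + 6 := by positivity
  have hpade := (div_le_iff₀ hD).1 (pade_le_log_one_add hy)
  rw [div_le_iff₀ (by positivity)]
  refine le_of_mul_le_mul_right ?_ hD
  nlinarith [mul_le_mul_of_nonneg_left hpade (by positivity : 0 ≤ (1 + y) * (6 + 2 * y)),
    mul_nonneg (sq_nonneg y) (sq_nonneg y)]

lemma poissonTail_le_exp_chernoff {ρ t : ℝ} (hρ : 0 ≤ ρ) (ht : 0 ≤ t) (m : ℕ) :
    poissonTail ρ m ≤ exp (ρ * (exp t - 1) - t * (m + 1)) := by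
  set C := exp (-ρ - t * (m + 1))
  let g : ℕ → ℝ := fun n => (ρ * exp t) ^ n / (n ! : ℝ)
  have hg : HasSum g (exp (ρ * exp t)) := by
    simpa [g, exp_eq_exp_ℝ] using NormedSpace.expSeries_div_hasSum_exp (ρ * exp t)
  -- Markov's inequality for `exp (t X)`, term by term.
  have hterm : ∀ i : ℕ, exp (-ρ) * ρ ^ (m + 1 + i) / (m + 1 + i)! ≤ C * g (m + 1 + i) := by
    intro i
    have hC : C * exp ((m + 1 + i : ℕ) * t) = exp (-ρ) * exp (t * i) := by
      rw [← exp_add, ← exp_add]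
      push_cast
      ring_nf
    calc exp (-ρ) * ρ ^ (m + 1 + i) / (m + 1 + i)!
        ≤ exp (-ρ) * ρ ^ (m + 1 + i) / (m + 1 + i)! * exp (t * i) :=
          le_mul_of_one_le_right (by positivity) (one_le_exp (by positivity))
      _ = C * g (m + 1 + i) := by
          simp only [g, mul_pow, ← exp_nat_mul]
          linear_combination (ρ ^ (m + 1 + i) / (m + 1 + i)!) * hC.symm
  have hshift : Summable fun i : ℕ => C * g (m + 1 + i) :=
    (hg.summable.comp_injective (add_right_injective (m + 1))).mul_left C
  calc poissonTail ρ m ≤ ∑' i : ℕ, C * g (m + 1 + i) :=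
        (hshift.of_nonneg_of_le (fun i => by positivity) hterm).tsum_le_tsum hterm hshift
    _ = C * ∑' i : ℕ, g (m + 1 + i) := tsum_mul_left
    _ ≤ C * exp (ρ * exp t) := by
        rw [← hg.tsum_eq]
        exact mul_le_mul_of_nonneg_left (tsum_comp_le_tsum_of_inj hg.summable
          (fun n => by positivity) (add_right_injective (m + 1))) (exp_pos _).le
    _ = exp (ρ * (exp t - 1) - t * (m + 1)) := by
        rw [← exp_add]
        ring_nf

lemma poissonTail_le_exp_neg_bernstein {ρ y : ℝ} {m : ℕ} (hρ : 0 < ρ) (hy : 0 ≤ y)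
    (hm : (m + 1 : ℝ) = ρ * (1 + y)) :
    poissonTail ρ m ≤ exp (-(3 * ρ * y ^ 2 / (6 + 2 * y))) := by
  have ht : 0 ≤ log (1 + y) := log_nonneg (by linarith)
  refine (poissonTail_le_exp_chernoff hρ.le ht m).trans ?_
  rw [exp_log (by linarith), hm, exp_le_exp,
    show 3 * ρ * y ^ 2 / (6 + 2 * y) = ρ * (3 * y ^ 2 / (6 + 2 * y)) by ring]
  nlinarith [mul_le_mul_of_nonneg_left (three_mul_sq_div_le_one_add_mul_log_one_add_sub hy) hρ.le]

lemma quadratic_nonneg_of_root_le {a b c s x : ℝ} (ha : 0 < a) (hs : 0 ≤ s)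
    (hd : discrim a b c = s * s) (hx : (-b + s) / (2 * a) ≤ x) :
    0 ≤ a * (x * x) + b * x + c := by
  rw [div_le_iff₀ (by positivity)] at hx
  rw [discrim] at hd
  nlinarith [mul_nonneg (by linarith : 0 ≤ x * (2 * a) + b - s)
    (by linarith : 0 ≤ x * (2 * a) + b + s)]

/-- The larger root in `y` of `3 ρ y² + 2 y log ε + 6 log ε`. -/
noncomputable def bernsteinRoot (ε ρ : ℝ) : ℝ :=
  -log ε / (3 * ρ) * (1 + √(1 - 18 * ρ / log ε))

lemma bernsteinRoot_pos {ε ρ : ℝ} (hε0 : 0 < ε) (hε1 : ε < 1) (hρ : 0 < ρ) :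
    0 < bernsteinRoot ε ρ := by
  have : 0 < -log ε / (3 * ρ) := div_pos (by linarith [log_neg hε0 hε1]) (by positivity)
  unfold bernsteinRoot
  positivity

lemma exp_neg_bernstein_le_of_bernsteinRoot_le {ε ρ y : ℝ} (hε0 : 0 < ε) (hε1 : ε < 1)
    (hρ : 0 < ρ) (hy : bernsteinRoot ε ρ ≤ y) :
    exp (-(3 * ρ * y ^ 2 / (6 + 2 * y))) ≤ ε := by
  have hy0 : 0 < y := (bernsteinRoot_pos hε0 hε1 hρ).trans_le hy
  rw [bernsteinRoot] at hy
  set L := log ε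
  have hL : L < 0 := log_neg hε0 hε1
  have hL0 : L ≠ 0 := hL.ne
  have hrad : 0 ≤ 1 - 18 * ρ / L := by
    have : 18 * ρ / L ≤ 0 := div_nonpos_of_nonneg_of_nonpos (by positivity) hL.le
    linarith
  have hquad : 0 ≤ 3 * ρ * (y * y) + 2 * L * y + 6 * L := by
    refine quadratic_nonneg_of_root_le (s := -2 * L * √(1 - 18 * ρ / L)) (by positivity)
      (mul_nonneg (by linarith) (sqrt_nonneg _)) ?_ ?_
    · rw [discrim, show -2 * L * √(1 - 18 * ρ / L) * (-2 * L * √(1 - 18 * ρ / L))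
          = 4 * L ^ 2 * (√(1 - 18 * ρ / L) * √(1 - 18 * ρ / L)) by ring, mul_self_sqrt hrad]
      field_simp
      ring
    · convert hy using 1
      field_simp
      ring
  rw [← exp_log hε0, exp_le_exp, neg_le, le_div_iff₀ (by positivity)]
  nlinarith

theorem mEps_upper_bound (ε ρ : ℝ) (hε0 : 0 < ε) (hε1 : ε < 1) (hρ : 0 < ρ)
    (mPlus : ℝ)
    (hm : mPlus = ρ - Real.log ε / 3 * (1 + Real.sqrt (1 - 18 * ρ / Real.log ε)) - 1) :
    poissonTail ρ ⌈mPlus⌉₊ ≤ ε ∧ mEps ε ρ ≤ ⌈mPlus⌉₊ := by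
  set y : ℝ := (⌈mPlus⌉₊ + 1) / ρ - 1
  have hroot : bernsteinRoot ε ρ ≤ y := by
    have hmPlus : (bernsteinRoot ε ρ + 1) * ρ = mPlus + 1 := by
      rw [hm, bernsteinRoot]
      field_simp
      ring
    rw [le_sub_iff_add_le, le_div_iff₀ hρ, hmPlus]
    linarith [Nat.le_ceil mPlus]
  have hy0 : 0 ≤ y := (bernsteinRoot_pos hε0 hε1 hρ).le.trans hroot
  have htail : poissonTail ρ ⌈mPlus⌉₊ ≤ ε :=
    (poissonTail_le_exp_neg_bernstein hρ hy0 (by simp only [y]; field_simp; ring)).trans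
      (exp_neg_bernstein_le_of_bernsteinRoot_le hε0 hε1 hρ hroot)
  exact ⟨htail, Nat.sInf_le htail⟩
end

section
/- The function m ↦ r_m(m) = P(Poisson(m) > m) is non-decreasing in m for integers m ≥ 1, and r_m(ρ) = P(Poisson(ρ) > m) is increasing in ρ for fixed m. Consequently, for real ρ ≥ 1 and integer m with 1 ≤ m ≤ ρ, P(Poisson(ρ) > m) ≥ 1 - 2e^{-1} > 0.04. -/
/-!
Writing `r_m(ρ) = 1 - e^{-ρ} ∑_{i ≤ m} ρ^i/i!`, the sum telescopes under differentiation and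
`d/dρ r_m(ρ) = e^{-ρ} ρ^m/m!`, which is positive, so `r_m` is increasing in `ρ`. Along the
diagonal, `r_{m+1}(m+1) - r_m(m) = ∫_m^{m+1} e^{-t} t^m/m! dt - e^{-(m+1)} (m+1)^m/m!`, and the
integral dominates the subtracted term because `t ↦ e^{-t} t^m` decreases on `[m, ∞)`.
The bound then reads `r_m(ρ) ≥ r_m(m) ≥ r_1(1) = 1 - 2/e`.
-/

open Finset Real Set Nat

lemma hasSum_exp_neg_mul_pow_div_factorial (ρ : ℝ) :
    HasSum (fun i : ℕ => exp (-ρ) * ρ ^ i / i !) 1 := by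
  have h : HasSum (fun i : ℕ => ρ ^ i / i !) (exp ρ) := by
    rw [exp_eq_exp_ℝ]; exact NormedSpace.expSeries_div_hasSum_exp ρ
  simpa [mul_div_assoc, ← exp_add] using h.mul_left (exp (-ρ))

lemma poissonTail_eq_one_sub (ρ : ℝ) (m : ℕ) :
    poissonTail ρ m = 1 - exp (-ρ) * ∑ i ∈ range (m + 1), ρ ^ i / i ! := by
  have h := (hasSum_exp_neg_mul_pow_div_factorial ρ).summable.sum_add_tsum_nat_add (m + 1)
  rw [(hasSum_exp_neg_mul_pow_div_factorial ρ).tsum_eq] at h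
  simp only [poissonTail, mul_sum, ← mul_div_assoc, add_comm (m + 1)]
  linarith

lemma poissonTail_succ (ρ : ℝ) (m : ℕ) :
    poissonTail ρ (m + 1) = poissonTail ρ m - exp (-ρ) * ρ ^ (m + 1) / (m + 1)! := by
  rw [poissonTail_eq_one_sub, poissonTail_eq_one_sub, sum_range_succ]
  ring

lemma hasDerivAt_sum_range_pow_div_factorial (n : ℕ) (x : ℝ) :
    HasDerivAt (fun y : ℝ => ∑ i ∈ range (n + 1), y ^ i / i !) (∑ i ∈ range n, x ^ i / i !) x := by
  refine (HasDerivAt.fun_sum (u := range (n + 1)) fun i _ =>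
    (hasDerivAt_pow i x).div_const (i ! : ℝ)).congr_deriv ?_
  rw [sum_range_succ']
  simp only [CharP.cast_eq_zero, zero_mul, zero_div, add_zero, add_tsub_cancel_right]
  refine sum_congr rfl fun i _ => ?_
  rw [factorial_succ]
  push_cast
  field_simp

lemma hasDerivAt_poissonTail (m : ℕ) (ρ : ℝ) :
    HasDerivAt (poissonTail · m) (exp (-ρ) * ρ ^ m / m !) ρ := by
  simp only [funext (poissonTail_eq_one_sub · m)]
  have hexp : HasDerivAt (fun x => exp (-x)) (-exp (-ρ)) ρ := by
    simpa using (hasDerivAt_neg ρ).exp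
  refine ((hexp.mul (hasDerivAt_sum_range_pow_div_factorial m ρ)).const_sub 1).congr_deriv ?_
  rw [sum_range_succ]
  ring

lemma poissonTail_sub_eq_integral (m : ℕ) (a b : ℝ) :
    poissonTail b m - poissonTail a m = ∫ t in a..b, exp (-t) * t ^ m / m ! :=
  (intervalIntegral.integral_eq_sub_of_hasDerivAt (fun x _ => hasDerivAt_poissonTail m x)
    (by apply Continuous.intervalIntegrable; fun_prop)).symm

lemma antitoneOn_exp_neg_mul_pow (m : ℕ) :
    AntitoneOn (fun t : ℝ => exp (-t) * t ^ m) (Ici (m : ℝ)) := by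
  intro s hs t ht hst
  simp only [Set.mem_Ici] at hs ht
  rcases (Nat.cast_nonneg m).trans hs |>.eq_or_lt with hs0 | hs0
  · obtain rfl : m = 0 := by exact_mod_cast (hs0 ▸ hs).antisymm (Nat.cast_nonneg m)
    simpa using hst
  have key : t ^ m ≤ s ^ m * exp (t - s) := calc
    t ^ m = s ^ m * (1 + (t - s) / s) ^ m := by rw [← mul_pow]; congr 1; field_simp; ring
    _ ≤ s ^ m * exp ((t - s) / s) ^ m := by
        gcongr
        linarith [add_one_le_exp ((t - s) / s)]
    _ ≤ s ^ m * exp (t - s) := by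
        rw [← exp_nat_mul]
        gcongr
        rw [mul_div_assoc']
        exact div_le_of_le_mul₀ hs0.le (by linarith) (by nlinarith)
  calc exp (-t) * t ^ m ≤ exp (-t) * (s ^ m * exp (t - s)) := by gcongr
    _ = exp (-s) * s ^ m := by rw [mul_left_comm, ← exp_add]; ring_nf

lemma poissonTail_diag_le_succ (m : ℕ) :
    poissonTail m m ≤ poissonTail (m + 1 : ℕ) (m + 1) := by
  have hlast : exp (-(m + 1 : ℝ)) * (m + 1 : ℝ) ^ (m + 1) / (m + 1)! =
      exp (-(m + 1 : ℝ)) * (m + 1 : ℝ) ^ m / m ! := by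
    rw [factorial_succ, pow_succ]
    push_cast
    field_simp
  have hint : exp (-(m + 1 : ℝ)) * (m + 1 : ℝ) ^ m / m ! ≤
      ∫ t in (m : ℝ)..m + 1, exp (-t) * t ^ m / m ! := calc
    _ = ∫ _ in (m : ℝ)..m + 1, exp (-(m + 1 : ℝ)) * (m + 1 : ℝ) ^ m / m ! := by simp
    _ ≤ _ := intervalIntegral.integral_mono_on (by linarith) (by simp)
        (by apply Continuous.intervalIntegrable; fun_prop) fun t ht =>
          div_le_div_of_nonneg_right (antitoneOn_exp_neg_mul_pow m ht.1 (by simp) ht.2)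
            (by positivity)
  have hstep := poissonTail_sub_eq_integral m m (m + 1)
  rw [Nat.cast_succ, poissonTail_succ, hlast]
  linarith

lemma monotone_poissonTail_diag : Monotone fun m : ℕ => poissonTail m m :=
  monotone_nat_of_le_succ poissonTail_diag_le_succ

lemma strictMonoOn_poissonTail (m : ℕ) : StrictMonoOn (poissonTail · m) (Ici 0) := by
  intro a ha b _ hab
  rw [← sub_pos, poissonTail_sub_eq_integral]
  refine intervalIntegral.intervalIntegral_pos_of_pos_on
    (by apply Continuous.intervalIntegrable; fun_prop) (fun t ht => ?_) hab
  have : 0 < t := lt_of_le_of_lt ha ht.1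
  positivity

lemma poissonTail_one_one : poissonTail 1 1 = 1 - 2 * exp (-1) := by
  rw [poissonTail_eq_one_sub]
  norm_num [sum_range_succ]
  ring

theorem poissonTail_monotonicity :
    (∀ m m' : ℕ, 1 ≤ m → m ≤ m' → poissonTail (m : ℝ) m ≤ poissonTail (m' : ℝ) m') ∧
    (∀ m : ℕ, ∀ ρ₁ ρ₂ : ℝ, 0 < ρ₁ → ρ₁ < ρ₂ → poissonTail ρ₁ m < poissonTail ρ₂ m) ∧
    (∀ (ρ : ℝ) (m : ℕ), 1 ≤ ρ → 1 ≤ m → (m : ℝ) ≤ ρ →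
      1 - 2 * Real.exp (-1) ≤ poissonTail ρ m) ∧
    (0.04 : ℝ) < 1 - 2 * Real.exp (-1) := by
  refine ⟨fun m m' _ h => monotone_poissonTail_diag h,
    fun m ρ₁ ρ₂ h₁ h₁₂ => strictMonoOn_poissonTail m h₁.le (h₁.trans h₁₂).le h₁₂,
    fun ρ m _ hm hmρ => ?_, by linarith [exp_neg_one_lt_d9]⟩
  calc 1 - 2 * exp (-1) = poissonTail (1 : ℕ) 1 := by simpa using poissonTail_one_one.symm
    _ ≤ poissonTail m m := monotone_poissonTail_diag hm
    _ ≤ poissonTail ρ m := (strictMonoOn_poissonTail m).monotoneOn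
        (mem_Ici.2 (Nat.cast_nonneg m)) (mem_Ici.2 ((Nat.cast_nonneg m).trans hmρ)) hmρ
end

section
/- Let ε < 0.04 and ρ > 0 with m > ρ where m = m_ε(ρ). Suppose the Short (2013) bound Φ(-√(2ρ h((m+1)/ρ))) < P(Poisson(ρ) > m) holds, where Φ is the standard normal CDF and h(x) = 1 - x + x log x. Then, using Φ(-y) > (1/y - 1/y³)φ(y) for y > √3 and h(x) ≤ (x-1)²/2, one obtains ε ≥ (1/√(2π)) · ((2ρ h(m₊'/ρ))^{-1/2} - (2ρ h(m₊'/ρ))^{-3/2}) · exp(-(m+1-ρ)²/(2ρ)) for any m₊' ≥ m+1 with √(2ρ h((m+1)/ρ)) > √3. -/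
/-- The standard normal cumulative distribution function. -/
noncomputable def stdNormalCDF (x : ℝ) : ℝ :=
  ∫ t in Set.Iic x, Real.exp (-t ^ 2 / 2) / Real.sqrt (2 * Real.pi)

open MeasureTheory Set Filter Real Topology InformationTheory

lemma h_eq_klFun : h = klFun := by
  ext x
  rw [h, klFun_apply]
  ring

lemma monotoneOn_klFun : MonotoneOn klFun (Ici 1) := by
  refine monotoneOn_of_deriv_nonneg (convex_Ici 1) continuous_klFun.continuousOn
    (fun x hx => ?_) fun x hx => ?_ <;> rw [interior_Ici] at hx
  · exact (hasDerivAt_klFun (zero_lt_one.trans hx).ne').differentiableAt.differentiableWithinAt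
  · rw [deriv_klFun]
    exact log_nonneg hx.out.le

lemma klFun_le_sq_div_two {x : ℝ} (hx : 1 ≤ x) : klFun x ≤ (x - 1) ^ 2 / 2 := by
  have hx0 : 0 < x := by linarith
  have hlog : log x ≤ (x - x⁻¹) / 2 := by
    rw [← sinh_log hx0]
    exact self_le_sinh_iff.2 (log_nonneg hx)
  have : x * log x ≤ (x ^ 2 - 1) / 2 := by
    calc x * log x ≤ x * ((x - x⁻¹) / 2) := by gcongr
      _ = (x ^ 2 - 1) / 2 := by field_simp
  rw [klFun_apply]
  linarith

lemma two_mul_mul_h_div_le {ρ x : ℝ} (hρ : 0 < ρ) (hx : ρ ≤ x) :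
    2 * ρ * h (x / ρ) ≤ (x - ρ) ^ 2 / ρ := by
  have := klFun_le_sq_div_two ((one_le_div hρ).2 hx)
  rw [h_eq_klFun]
  calc 2 * ρ * klFun (x / ρ) ≤ 2 * ρ * ((x / ρ - 1) ^ 2 / 2) := by gcongr
    _ = (x - ρ) ^ 2 / ρ := by field_simp

lemma antitoneOn_one_div_sub_one_div_pow_three :
    AntitoneOn (fun y : ℝ => 1 / y - 1 / y ^ 3) (Ici √3) := by
  intro a ha b hb hab
  have ha0 : 0 < a := (sqrt_pos.2 (by norm_num)).trans_le ha
  have hb0 : 0 < b := ha0.trans_le hab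
  have h3 : √3 ^ 2 = 3 := sq_sqrt (by norm_num)
  have hsum : a ^ 2 + a * b + b ^ 2 ≤ a ^ 2 * b ^ 2 := by
    nlinarith [mul_le_mul ha hb (sqrt_nonneg 3) ha0.le, mul_le_mul ha ha (sqrt_nonneg 3) ha0.le,
      mul_le_mul hb hb (sqrt_nonneg 3) hb0.le]
  have hdiff : (1 / a - 1 / a ^ 3) - (1 / b - 1 / b ^ 3)
      = (b - a) * (a ^ 2 * b ^ 2 - (a ^ 2 + a * b + b ^ 2)) / (a ^ 3 * b ^ 3) := by
    field_simp
    ring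
  have : 0 ≤ (b - a) * (a ^ 2 * b ^ 2 - (a ^ 2 + a * b + b ^ 2)) / (a ^ 3 * b ^ 3) :=
    div_nonneg (mul_nonneg (by linarith) (by linarith)) (by positivity)
  show 1 / b - 1 / b ^ 3 ≤ 1 / a - 1 / a ^ 3
  linarith

lemma integrable_exp_neg_sq_div_two : Integrable fun t : ℝ => exp (-t ^ 2 / 2) := by
  simpa [neg_div, div_eq_inv_mul] using integrable_exp_neg_mul_sq (b := 1 / 2) (by norm_num)

noncomputable def gaussianTailMinorant (t : ℝ) : ℝ := (1 / t - 1 / t ^ 3) * exp (-t ^ 2 / 2)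

lemma hasDerivAt_gaussianTailMinorant {x : ℝ} (hx : x ≠ 0) :
    HasDerivAt gaussianTailMinorant ((3 / x ^ 4 - 1) * exp (-x ^ 2 / 2)) x := by
  have hexp : HasDerivAt (fun t : ℝ => exp (-t ^ 2 / 2)) (exp (-x ^ 2 / 2) * -x) x := by
    refine (((hasDerivAt_pow 2 x).neg).div_const 2).exp.congr_deriv ?_
    simp only [Pi.neg_apply]
    push_cast
    ring
  unfold gaussianTailMinorant
  simp only [one_div]
  refine (((hasDerivAt_inv hx).sub ((hasDerivAt_pow 3 x).inv (pow_ne_zero 3 hx))).mul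
    hexp).congr_deriv ?_
  simp only [Pi.sub_apply, Pi.inv_apply]
  field_simp
  ring

lemma tendsto_gaussianTailMinorant_atTop : Tendsto gaussianTailMinorant atTop (𝓝 0) := by
  have hpoly : Tendsto (fun t : ℝ => 1 / t - 1 / t ^ 3) atTop (𝓝 0) := by
    simpa using (tendsto_inv_atTop_zero (𝕜 := ℝ)).sub
      (tendsto_inv_atTop_zero.comp (tendsto_pow_atTop three_ne_zero))
  have hexp : Tendsto (fun t : ℝ => exp (-t ^ 2 / 2)) atTop (𝓝 0) := by
    refine tendsto_exp_atBot.comp ?_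
    simpa [Function.comp_def, neg_div] using tendsto_neg_atTop_atBot.comp
      ((tendsto_pow_atTop two_ne_zero).atTop_div_const (two_pos : (0 : ℝ) < 2))
  have := hpoly.mul hexp
  rwa [mul_zero] at this

lemma gaussianTailMinorant_le_integral_Ioi {y : ℝ} (hy : 0 < y) :
    gaussianTailMinorant y ≤ ∫ t in Ioi y, exp (-t ^ 2 / 2) := by
  have hint : IntegrableOn (fun x : ℝ => (3 / x ^ 4 - 1) * exp (-x ^ 2 / 2)) (Ioi y) := by
    refine integrable_exp_neg_sq_div_two.integrableOn.bdd_mul (c := 3 / y ^ 4 + 1) ?_ ?_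
    · refine ContinuousOn.aestronglyMeasurable ?_ measurableSet_Ioi
      exact (continuousOn_const.div (continuous_pow 4).continuousOn
        fun x hx => pow_ne_zero _ (hy.trans hx).ne').sub continuousOn_const
    · refine (ae_restrict_iff' measurableSet_Ioi).2 (ae_of_all _ fun x hx => ?_)
      have hx0 : 0 < x := hy.trans hx
      have : 3 / x ^ 4 ≤ 3 / y ^ 4 := by gcongr; exact hx.le
      rw [Real.norm_eq_abs, abs_le]
      constructor <;> nlinarith [div_pos three_pos (pow_pos hx0 4)]
  have hftc := integral_Ioi_of_hasDerivAt_of_tendsto'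
    (fun x hx => hasDerivAt_gaussianTailMinorant (hy.trans_le hx).ne') hint
    tendsto_gaussianTailMinorant_atTop
  calc gaussianTailMinorant y = ∫ x in Ioi y, -((3 / x ^ 4 - 1) * exp (-x ^ 2 / 2)) := by
        rw [integral_neg, hftc, zero_sub, neg_neg]
    _ ≤ ∫ t in Ioi y, exp (-t ^ 2 / 2) := by
        refine setIntegral_mono_on hint.neg integrable_exp_neg_sq_div_two.integrableOn
          measurableSet_Ioi fun x hx => ?_
        have : 0 ≤ 3 / x ^ 4 * exp (-x ^ 2 / 2) := by have := hy.trans hx; positivity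
        linarith

lemma stdNormalCDF_neg (y : ℝ) :
    stdNormalCDF (-y) = (∫ t in Ioi y, exp (-t ^ 2 / 2)) / √(2 * π) := by
  rw [stdNormalCDF, integral_div, ← neg_neg y, ← integral_comp_neg_Iic, neg_neg]
  simp only [neg_sq]

lemma poissonTail_mEps_le {ε : ℝ} (ρ : ℝ) (hε : 0 < ε) : poissonTail ρ (mEps ε ρ) ≤ ε := by
  set f : ℕ → ℝ := fun n => exp (-ρ) * ρ ^ n / n.factorial
  obtain ⟨N, hN⟩ := eventually_atTop.1 ((tendsto_sum_nat_add f).eventually_lt_const hε)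
  have htail : poissonTail ρ N = ∑' k, f (k + (N + 1)) :=
    tsum_congr fun k => by rw [add_comm k]
  have hN : poissonTail ρ N ≤ ε := htail ▸ (hN (N + 1) N.le_succ).le
  exact Nat.sInf_mem (s := {m : ℕ | poissonTail ρ m ≤ ε}) ⟨N, hN⟩

theorem mEps_lower_bound_inequality_general (ε ρ : ℝ) (hε0 : 0 < ε)
    (hρ : 0 < ρ) (m : ℕ) (hm : m = mEps ε ρ) (hmρ : ρ < m)
    (hShort : stdNormalCDF (-Real.sqrt (2 * ρ * h ((m + 1 : ℝ) / ρ))) < poissonTail ρ m)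
    (mPlus' : ℝ) (hmPlus' : (m : ℝ) + 1 ≤ mPlus')
    (hy : Real.sqrt 3 < Real.sqrt (2 * ρ * h ((m + 1 : ℝ) / ρ))) :
    (1 / Real.sqrt (2 * Real.pi)) *
        (1 / Real.sqrt (2 * ρ * h (mPlus' / ρ)) -
          1 / Real.sqrt (2 * ρ * h (mPlus' / ρ)) ^ 3) *
        Real.exp (-((m : ℝ) + 1 - ρ) ^ 2 / (2 * ρ)) ≤ ε := by
  set y := √(2 * ρ * h ((m + 1 : ℝ) / ρ))
  set y' := √(2 * ρ * h (mPlus' / ρ))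
  have hy1 : 1 < y := ((lt_sqrt zero_le_one).2 (by norm_num)).trans hy
  have hyy' : y ≤ y' := by
    have ha : (m + 1 : ℝ) / ρ ∈ Ici 1 := (one_le_div hρ).2 (by linarith)
    have hb : mPlus' / ρ ∈ Ici 1 := (one_le_div hρ).2 (by linarith)
    refine sqrt_le_sqrt (mul_le_mul_of_nonneg_left ?_ (by positivity))
    rw [h_eq_klFun]
    exact monotoneOn_klFun ha hb (by gcongr)
  have hexp : -((m : ℝ) + 1 - ρ) ^ 2 / (2 * ρ) ≤ -y ^ 2 / 2 := by
    have := two_mul_mul_h_div_le hρ (by linarith : ρ ≤ (m : ℝ) + 1)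
    rw [sq_sqrt (by linarith [sqrt_pos.1 (zero_lt_one.trans hy1)])]
    rw [neg_div, neg_div, neg_le_neg_iff, mul_comm 2 ρ, ← div_div]
    linarith
  have hfactor : 0 ≤ 1 / y - 1 / y ^ 3 := sub_nonneg.2 <|
    one_div_le_one_div_of_le (by positivity) (le_self_pow₀ hy1.le three_ne_zero)
  calc _ = (1 / y' - 1 / y' ^ 3) * exp (-((m : ℝ) + 1 - ρ) ^ 2 / (2 * ρ)) / √(2 * π) := by ring
    _ ≤ gaussianTailMinorant y / √(2 * π) := by
      rw [gaussianTailMinorant]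
      gcongr ?_ * ?_ / _
      · exact antitoneOn_one_div_sub_one_div_pow_three hy.le (hy.le.trans hyy') hyy'
      · exact exp_le_exp.2 hexp
    _ ≤ stdNormalCDF (-y) := by
      rw [stdNormalCDF_neg]
      gcongr
      exact gaussianTailMinorant_le_integral_Ioi (zero_lt_one.trans hy1)
    _ ≤ poissonTail ρ m := hShort.le
    _ ≤ ε := hm ▸ poissonTail_mEps_le ρ hε0

theorem mEps_lower_bound_inequality (ε ρ : ℝ) (hε0 : 0 < ε) (hε : ε < 0.04)
    (hρ : 0 < ρ) (m : ℕ) (hm : m = mEps ε ρ) (hmρ : ρ < m)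
    (hShort : stdNormalCDF (-Real.sqrt (2 * ρ * h ((m + 1 : ℝ) / ρ))) < poissonTail ρ m)
    (mPlus' : ℝ) (hmPlus' : (m : ℝ) + 1 ≤ mPlus')
    (hy : Real.sqrt 3 < Real.sqrt (2 * ρ * h ((m + 1 : ℝ) / ρ))) :
    (1 / Real.sqrt (2 * Real.pi)) *
        (1 / Real.sqrt (2 * ρ * h (mPlus' / ρ)) -
          1 / Real.sqrt (2 * ρ * h (mPlus' / ρ)) ^ 3) *
        Real.exp (-((m : ℝ) + 1 - ρ) ^ 2 / (2 * ρ)) ≤ ε :=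
  mEps_lower_bound_inequality_general ε ρ hε0 hρ m hm hmρ hShort mPlus' hmPlus' hy
end
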